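/- arXiv:1703.00957 — 2 statements merged into one kernel-verified Lean document; each statement's English description precedes it below -/
import Mathlib

section
/- Let v : ℝ → ℝ be strictly positive with f₂(k) = k/v(k) + v(k)/2, and suppose g₂ : ℝ → ℝ satisfies f₂(g₂(z)) = z for all z. Then there exists Z such that g₂(z) ≤ z²/2 for all z ≥ Z. -/
theorem stmt_3 (v : ℝ → ℝ) (hv : ∀ k, 0 < v k)
    (f₂ g₂ : ℝ → ℝ) (hf₂ : ∀ k, f₂ k = k / v k + v k / 2)
    (hg₂ : ∀ z, f₂ (g₂ z) = z) :
    ∃ Z : ℝ, ∀ z ≥ Z, g₂ z ≤ z ^ 2 / 2 := by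
  refine ⟨0, fun z hz => ?_⟩
  rcases le_or_gt (g₂ z) 0 with h | h
  · nlinarith
  · have hz' := hg₂ z
    rw [hf₂] at hz'
    have hv' := hv (g₂ z)
    have key : g₂ z / v (g₂ z) * v (g₂ z) = g₂ z := div_mul_cancel₀ _ (ne_of_gt hv')
    nlinarith [sq_nonneg (g₂ z / v (g₂ z) - v (g₂ z) / 2)]
end

section
/- For the SSVI total variance w(k) = (θ/2)(1 + ρφk + √((φk+ρ)² + 1 - ρ²)) with θ > 0, φ > 0 and ρ ∈ (-1,1) satisfying θφ(1+|ρ|) = 4 and ρ ≥ 0, one has lim_{k→∞} (w(k) - 2k) = (θ/2)(1+ρ) > 0. -/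
open Filter

theorem stmt_17 (θ φ ρ : ℝ) (hθ : 0 < θ) (hφ : 0 < φ) (hρ : ρ ∈ Set.Ioo (-1:ℝ) 1)
    (hρ0 : 0 ≤ ρ) (hlim : θ * φ * (1 + |ρ|) = 4)
    (w : ℝ → ℝ)
    (hw : ∀ k, w k = θ / 2 * (1 + ρ * φ * k + Real.sqrt ((φ * k + ρ)^2 + 1 - ρ^2))) :
    Tendsto (fun k => w k - 2 * k) atTop (nhds (θ / 2 * (1 + ρ))) ∧
    0 < θ / 2 * (1 + ρ) := by
  obtain ⟨hρ1, hρ2⟩ := hρ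
  have habs : |ρ| = ρ := abs_of_nonneg hρ0
  rw [habs] at hlim
  have hc : 0 < 1 - ρ^2 := by nlinarith
  set c := 1 - ρ^2 with hcdef
  set f : ℝ → ℝ := fun k => Real.sqrt ((φ * k + ρ)^2 + c) - (φ * k + ρ) with hf
  have hx : Tendsto (fun k : ℝ => φ * k + ρ) atTop atTop := by
    apply Filter.tendsto_atTop_add_const_right
    exact Tendsto.const_mul_atTop hφ tendsto_id
  have hf0 : Tendsto f atTop (nhds 0) := by
    have hub : Tendsto (fun k : ℝ => c / (2 * (φ * k + ρ))) atTop (nhds 0) := by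
      apply Tendsto.div_atTop tendsto_const_nhds
      exact Tendsto.const_mul_atTop two_pos hx
    apply squeeze_zero' ?_ ?_ hub
    · filter_upwards [hx.eventually_ge_atTop 0] with k hk
      have h1 : (φ * k + ρ) ≤ Real.sqrt ((φ * k + ρ)^2 + c) := by
        rw [show (φ * k + ρ) = Real.sqrt ((φ * k + ρ)^2) by
          rw [Real.sqrt_sq hk]]
        apply Real.sqrt_le_sqrt
        · rw [Real.sq_sqrt (by positivity)]
          linarith
      simp only [hf]
      linarith
    · filter_upwards [hx.eventually_ge_atTop 1] with k hk
      have hkpos : 0 < φ * k + ρ := by linarith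
      have h2 : Real.sqrt ((φ * k + ρ)^2 + c) ≤ (φ * k + ρ) + c / (2 * (φ * k + ρ)) := by
        set s := Real.sqrt ((φ * k + ρ)^2 + c) with hs
        have hs2 : s ^ 2 = (φ * k + ρ)^2 + c := Real.sq_sqrt (by positivity)
        have hsnn : 0 ≤ s := Real.sqrt_nonneg _
        have heq : c / (2 * (φ * k + ρ)) * (2 * (φ * k + ρ)) = c := by
          field_simp
        nlinarith [sq_nonneg (c / (2 * (φ * k + ρ))), sq_nonneg (s - (φ * k + ρ))]
      simp only [hf]
      linarith
  have key : ∀ k, w k - 2 * k = θ / 2 * (1 + ρ) + θ / 2 * f k := by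
    intro k
    rw [hw k]
    simp only [hf]
    rw [show (φ * k + ρ)^2 + 1 - ρ^2 = (φ * k + ρ)^2 + c by ring]
    linear_combination (k / 2) * hlim
  constructor
  · simp only [key]
    have := (hf0.const_mul (θ / 2)).const_add (θ / 2 * (1 + ρ))
    simpa using this
  · positivity
end
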